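/- Let k be a commutative ring, A a k-algebra, and I = ⟨Q | R⟩ a small category presented by a quiver with relations. Then Gr(Δ(A)) ≅ A ⊗_k (kQ/⟨R⟩_k), i.e., the Grothendieck construction of the diagonal functor at A is isomorphic to the tensor product over k of A with the k-linear category kQ modulo the ideal generated by g − h for (g,h) ∈ R. -/

import Mathlib

/-!
The ideal `⟨R⟩_k` is spanned by the differences `p - q` of paths identified by the compatible
closure of `R`, and it is killed by the map sending a path to its class in `I = ⟨Q ∣ R⟩`.
Hence `kQ/⟨R⟩_k` is, hom-set by hom-set, the free `k`-module on the morphisms of `I`, and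
`A ⊗_k k[I(i,j)] ≅ A[I(i,j)]`, the hom-module of `Gr(Δ(A))`. On generators `a ⊗ p ↦ a·[p]`
both compositions are multiplication in `A` together with concatenation of paths.
-/

open CategoryTheory Quiver Finsupp TensorProduct

/-- Convolution composition in the path `k`-category `kQ`. -/
noncomputable def pcomp {V : Type} [Quiver.{1} V] {A : Type*} [Ring A] {i j l : V}
    (f : Path i j →₀ A) (g : Path j l →₀ A) : Path i l →₀ A :=
  f.sum fun p fp => g.sum fun q gq => Finsupp.single (p.comp q) (gq * fp)

/-- The relation `R` viewed as a `HomRel` on the free category `ℙQ = Paths V`. -/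
def pathsRel {V : Type} [Quiver.{1} V]
    (R : ∀ ⦃i j : V⦄, Path i j → Path i j → Prop) : HomRel (Paths V) :=
  fun {_ _} p q => R p q

/-- The category `I = ⟨Q ∣ R⟩`. -/
def PresCat {V : Type} [Quiver.{1} V]
    (R : ∀ ⦃i j : V⦄, Path i j → Path i j → Prop) : Type :=
  CategoryTheory.Quotient (pathsRel R)

noncomputable instance {V : Type} [Quiver.{1} V]
    (R : ∀ ⦃i j : V⦄, Path i j → Path i j → Prop) : Category (PresCat R) :=
  inferInstanceAs (Category (CategoryTheory.Quotient (pathsRel R)))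

/-- The object of `I = ⟨Q ∣ R⟩` corresponding to a vertex `i`. -/
def presObj {V : Type} [Quiver.{1} V]
    (R : ∀ ⦃i j : V⦄, Path i j → Path i j → Prop) (i : V) : PresCat R :=
  ⟨i⟩

/-- Composition in the Grothendieck construction `Gr(Δ(A))`. -/
noncomputable def gconv {C : Type*} [Category C] {A : Type*} [Ring A] {X Y Z : C}
    (f : (X ⟶ Y) →₀ A) (g : (Y ⟶ Z) →₀ A) : (X ⟶ Z) →₀ A :=
  f.sum fun a fa => g.sum fun b gb => Finsupp.single (a ≫ b) (gb * fa)

/-- The component at `(i,j)` of the ideal `⟨R⟩_k` of the path `k`-category `kQ`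
generated by the `g - h` with `(g,h) ∈ R`. -/
noncomputable def Idk (k : Type*) [CommRing k] {V : Type} [Quiver.{1} V]
    (R : ∀ ⦃i j : V⦄, Path i j → Path i j → Prop) (i j : V) :
    Submodule k (Path i j →₀ k) :=
  Submodule.span k
    {f : Path i j →₀ k | ∃ (i' j' : V) (x y : k)
      (α : Path i i') (p q : Path i' j') (β : Path j' j), R p q ∧
      f = pcomp (Finsupp.single α x)
            (pcomp (Finsupp.single p (1 : k) - Finsupp.single q (1 : k))
              (Finsupp.single β y))}

namespace Finsupp

variable {k : Type*} [Ring k] {X : Type*} {r : X → X → Prop}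

/-- The two hypotheses say that `N` is exactly the kernel of pushing forward along `Quot.mk r`. -/
noncomputable def quotientEquivQuot (N : Submodule k (X →₀ k))
    (h_rel : ∀ x y, r x y → single x 1 - single y 1 ∈ N)
    (h_ker : N ≤ LinearMap.ker (lmapDomain k k (Quot.mk r))) :
    ((X →₀ k) ⧸ N) ≃ₗ[k] (Quot r →₀ k) :=
  LinearEquiv.ofLinearMap (N.liftQ _ h_ker)
    (linearCombination k (Quot.lift (fun x => N.mkQ (single x 1))
      fun x y hxy => (Submodule.Quotient.eq N).2 (h_rel x y hxy)))
    (by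
      ext c
      induction c using Quot.ind
      simp)
    (by
      ext x
      simp)

@[simp]
lemma quotientEquivQuot_mk_single (N : Submodule k (X →₀ k))
    (h_rel : ∀ x y, r x y → single x 1 - single y 1 ∈ N)
    (h_ker : N ≤ LinearMap.ker (lmapDomain k k (Quot.mk r))) (x : X) (c : k) :
    quotientEquivQuot N h_rel h_ker (Submodule.Quotient.mk (single x c))
      = single (Quot.mk r x) c := by
  simp [quotientEquivQuot]

end Finsupp

section PathAlgebra

variable {V : Type} [Quiver.{1} V] {A : Type*} [Ring A] {i j l : V}

lemma pcomp_single_single (p : Path i j) (a : A) (q : Path j l) (b : A) :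
    pcomp (single p a) (single q b) = single (p.comp q) (b * a) := by
  simp [pcomp]

lemma pcomp_sub_left (f f' : Path i j →₀ A) (g : Path j l →₀ A) :
    pcomp (f - f') g = pcomp f g - pcomp f' g := by
  unfold pcomp
  rw [sum_sub_index fun p a b => by simp only [mul_sub, single_sub, sum_sub]]

lemma pcomp_sub_right (f : Path i j →₀ A) (g g' : Path j l →₀ A) :
    pcomp f (g - g') = pcomp f g - pcomp f g' := by
  unfold pcomp
  rw [← sum_sub]
  congr 1
  ext p a
  rw [sum_sub_index fun q b c => by rw [sub_mul, single_sub]]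

lemma pcomp_single_sub_single {j' : V} (α : Path i j) (a : A) (p q : Path j j')
    (β : Path j' l) (b : A) :
    pcomp (single α a) (pcomp (single p 1 - single q 1) (single β b))
      = single (α.comp (p.comp β)) (b * a) - single (α.comp (q.comp β)) (b * a) := by
  simp only [pcomp_sub_left, pcomp_sub_right, pcomp_single_single, mul_one]

end PathAlgebra

section Presentation

variable (k : Type*) [CommRing k] {V : Type} [Quiver.{1} V]
  (R : ∀ ⦃i j : V⦄, Path i j → Path i j → Prop) {i j : V}

def pathHom (p : Path i j) : presObj R i ⟶ presObj R j :=
  Quot.mk _ p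

lemma pathHom_nil (i : V) : pathHom R (Path.nil : Path i i) = 𝟙 (presObj R i) :=
  rfl

lemma pathHom_comp {l : V} (p : Path i j) (q : Path j l) :
    pathHom R (p.comp q) = pathHom R p ≫ pathHom R q :=
  rfl

lemma single_sub_single_mem_Idk {p q : Path i j} (h : HomRel.CompClosure (pathsRel R) p q) :
    single p (1 : k) - single q 1 ∈ Idk k R i j := by
  obtain ⟨_, _, α, p, q, β, hpq⟩ := h
  refine Submodule.subset_span ⟨_, _, 1, 1, α, p, q, β, hpq, ?_⟩
  have h := (pcomp_single_sub_single (A := k) α 1 p q β 1).symm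
  rwa [mul_one] at h

lemma Idk_le_ker_lmapDomain : Idk k R i j ≤ LinearMap.ker (lmapDomain k k (pathHom R)) := by
  rw [Idk, Submodule.span_le]
  rintro _ ⟨_, _, a, b, α, p, q, β, hpq, rfl⟩
  have hrel : pathHom R (α.comp (p.comp β)) = pathHom R (α.comp (q.comp β)) :=
    Quot.sound (HomRel.CompClosure.intro (C := Paths V) _ _ α p q β hpq)
  rw [SetLike.mem_coe, LinearMap.mem_ker, pcomp_single_sub_single, map_sub, lmapDomain_apply,
    lmapDomain_apply, mapDomain_single, mapDomain_single, hrel, sub_self]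

noncomputable def pathQuotientEquiv (i j : V) :
    ((Path i j →₀ k) ⧸ Idk k R i j) ≃ₗ[k] ((presObj R i ⟶ presObj R j) →₀ k) :=
  Finsupp.quotientEquivQuot (r := @HomRel.CompClosure (Paths V) _ (pathsRel R) i j) (Idk k R i j)
    (fun _ _ => single_sub_single_mem_Idk k R) (Idk_le_ker_lmapDomain k R)

lemma pathQuotientEquiv_mk_single (p : Path i j) (c : k) :
    pathQuotientEquiv k R i j (Submodule.Quotient.mk (single p c)) = single (pathHom R p) c :=
  Finsupp.quotientEquivQuot_mk_single _ _ _ p c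

variable (A : Type*) [Ring A] [Algebra k A]

open Classical in
noncomputable def tensorPathQuotientEquiv (i j : V) :
    (A ⊗[k] ((Path i j →₀ k) ⧸ Idk k R i j)) ≃ₗ[k] ((presObj R i ⟶ presObj R j) →₀ A) :=
  (LinearEquiv.lTensor A (pathQuotientEquiv k R i j)).trans
    (finsuppScalarRight k k A _)

open Classical in
lemma tensorPathQuotientEquiv_tmul_mk_single (a : A) (p : Path i j) (c : k) :
    tensorPathQuotientEquiv k R A i j (a ⊗ₜ Submodule.Quotient.mk (single p c))
      = single (pathHom R p) (c • a) := by
  rw [tensorPathQuotientEquiv, LinearEquiv.trans_apply, LinearEquiv.lTensor_tmul,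
    pathQuotientEquiv_mk_single, finsuppScalarRight_apply_tmul,
    sum_single_index (by rw [zero_smul, single_zero])]

end Presentation

lemma gconv_single_single {C : Type*} [Category C] {A : Type*} [Ring A] {X Y Z : C}
    (f : X ⟶ Y) (g : Y ⟶ Z) (a b : A) :
    gconv (single f a) (single g b) = single (f ≫ g) (b * a) := by
  simp [gconv]

/-- `Gr(Δ(A)) ≅ A ⊗_k (kQ/⟨R⟩_k)`: there is a family of `k`-linear
equivalences on hom-modules, preserving identities and composition (composition on
the tensor side is induced by multiplication in `A` and concatenation of paths). -/
theorem stmt11 (k : Type*) [CommRing k] (A : Type*) [Ring A] [Algebra k A]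
    (V : Type) [Quiver.{1} V] (R : ∀ ⦃i j : V⦄, Path i j → Path i j → Prop) :
    ∃ e : ∀ i j : V,
        (A ⊗[k] ((Path i j →₀ k) ⧸ Idk k R i j)) ≃ₗ[k]
          ((presObj R i ⟶ presObj R j) →₀ A),
      (∀ i : V,
        e i i ((1 : A) ⊗ₜ[k]
            Submodule.Quotient.mk (Finsupp.single Path.nil (1 : k)))
          = Finsupp.single (𝟙 (presObj R i)) (1 : A)) ∧
      (∀ (i j l : V) (x y : A) (p : Path i j) (q : Path j l),
        e i l ((y * x) ⊗ₜ[k]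
            Submodule.Quotient.mk (Finsupp.single (p.comp q) (1 : k)))
          = gconv (e i j (x ⊗ₜ[k] Submodule.Quotient.mk (Finsupp.single p (1 : k))))
              (e j l (y ⊗ₜ[k] Submodule.Quotient.mk (Finsupp.single q (1 : k))))) := by
  refine ⟨tensorPathQuotientEquiv k R A, fun i => ?_, fun i j l x y p q => ?_⟩
  · rw [tensorPathQuotientEquiv_tmul_mk_single, one_smul, pathHom_nil]
  · simp only [tensorPathQuotientEquiv_tmul_mk_single, one_smul, gconv_single_single,
      pathHom_comp]
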